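/- Let P be an orthogonal projection and U a unitary on a Hilbert space F. Define Ψ(z) = P(I - zU*P^⊥)⁻¹U*P restricted to Ran P, for z in the open unit disc. Then Ψ(z) is a well-defined contraction on Ran P for every z ∈ 𝔻, i.e., ‖Ψ(z)‖ ≤ 1. -/

import Mathlib

/-!
Put `w = P x` and `y = (I - z U* P^⊥)⁻¹ U* w`, so that `U y = w + z P^⊥ y`. Since `w ⊥ P^⊥ y`,
Pythagoras gives `‖y‖² = ‖U y‖² = ‖w‖² + |z|² ‖P^⊥ y‖²`, while also
`‖y‖² = ‖P y‖² + ‖P^⊥ y‖²`; hence `‖P y‖ ≤ ‖w‖ ≤ ‖x‖`. Invertibility is the Neumann series,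
as `‖z U* P^⊥‖ ≤ |z| < 1`.
-/

open ContinuousLinearMap

namespace ContinuousLinearMap

variable {𝕜 E : Type*} [RCLike 𝕜] [NormedAddCommGroup E] [InnerProductSpace 𝕜 E]
  [CompleteSpace E] {P U : E →L[𝕜] E}

theorem IsStarProjection.inner_apply_one_sub_apply_eq_zero (hP : IsStarProjection P)
    (a b : E) : inner 𝕜 (P a) ((1 - P) b) = 0 := by
  rw [← adjoint_inner_right, ← star_eq_adjoint, hP.isSelfAdjoint.star_eq, ← comp_apply,
    ← mul_def, hP.isIdempotentElem.mul_one_sub_self, zero_apply, inner_zero_right]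

theorem IsStarProjection.norm_sq_apply_add_norm_sq_one_sub_apply (hP : IsStarProjection P)
    (y : E) : ‖P y‖ ^ 2 + ‖(1 - P) y‖ ^ 2 = ‖y‖ ^ 2 := by
  have hsplit : P y + (1 - P) y = y := by simp
  rw [sq, sq, sq, ← norm_add_sq_eq_norm_sq_add_norm_sq_of_inner_eq_zero _ _
    (hP.inner_apply_one_sub_apply_eq_zero y y), hsplit]

theorem IsStarProjection.norm_apply_le_of_isometry_apply_eq (hP : IsStarProjection P)
    {V : E → E} (hV : ∀ y, ‖V y‖ = ‖y‖) {c : 𝕜} (hc : ‖c‖ ≤ 1) {w y : E}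
    (hw : P w = w) (hy : V y = w + c • (1 - P) y) : ‖P y‖ ≤ ‖w‖ := by
  have horth : inner 𝕜 w (c • (1 - P) y) = 0 := by
    rw [← hw, ← map_smul]
    exact hP.inner_apply_one_sub_apply_eq_zero w _
  have hVy : ‖y‖ ^ 2 = ‖w‖ ^ 2 + ‖c‖ ^ 2 * ‖(1 - P) y‖ ^ 2 := by
    rw [← hV, hy, sq, norm_add_sq_eq_norm_sq_add_norm_sq_of_inner_eq_zero _ _ horth, norm_smul]
    ring
  have hc2 : ‖c‖ ^ 2 ≤ 1 := pow_le_one₀ (norm_nonneg c) hc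
  have hPy := hP.norm_sq_apply_add_norm_sq_one_sub_apply y
  have hsq : ‖P y‖ ^ 2 ≤ ‖w‖ ^ 2 := by nlinarith [sq_nonneg ‖(1 - P) y‖]
  exact (sq_le_sq₀ (norm_nonneg _) (norm_nonneg _)).mp hsq

theorem isUnit_one_sub_smul_adjoint_comp_one_sub (hU : U ∈ unitary (E →L[𝕜] E))
    (hP : IsStarProjection P) {z : 𝕜} (hz : ‖z‖ < 1) :
    IsUnit (1 - z • (adjoint U ∘L (1 - P))) := by
  refine (Units.oneSub _ ?_).isUnit
  calc ‖z • (adjoint U ∘L (1 - P))‖ = ‖z‖ * ‖1 - P‖ := by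
        rw [norm_smul, ← mul_def, ← star_eq_adjoint,
          CStarRing.norm_mem_unitary_mul _ (Unitary.star_mem hU)]
    _ ≤ ‖z‖ := mul_le_of_le_one_right (norm_nonneg z) (hP.one_sub.norm_le _)
    _ < 1 := hz

theorem apply_eq_add_smul_of_one_sub_smul_adjoint_comp_apply_eq (hU : U ∘L adjoint U = 1)
    {T : E →L[𝕜] E} {z : 𝕜} {w y : E} (h : (1 - z • (adjoint U ∘L T)) y = adjoint U w) :
    U y = w + z • T y := by
  have hUU : ∀ v, U (adjoint U v) = v := fun v => congr($hU v)
  have h' : y - z • adjoint U (T y) = adjoint U w := h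
  have hUh := congr(U $h')
  rw [map_sub, map_smul, hUU, hUU] at hUh
  exact sub_eq_iff_eq_add.mp hUh

end ContinuousLinearMap

theorem realization_contractive {F : Type*} [NormedAddCommGroup F]
    [InnerProductSpace ℂ F] [CompleteSpace F]
    (P U : F →L[ℂ] F) (hP : IsSelfAdjoint P) (hP2 : P ∘L P = P)
    (hU1 : adjoint U ∘L U = 1) (hU2 : U ∘L adjoint U = 1) :
    ∀ z : ℂ, ‖z‖ < 1 →
      IsUnit ((1 : F →L[ℂ] F) - z • (adjoint U ∘L (1 - P))) ∧
      ‖P ∘L Ring.inverse ((1 : F →L[ℂ] F) - z • (adjoint U ∘L (1 - P)))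
          ∘L (adjoint U ∘L P)‖ ≤ 1 := by
  intro z hz
  have hPproj : IsStarProjection P := ⟨hP2, hP⟩
  have hU : U ∈ unitary (F →L[ℂ] F) := Unitary.mem_iff.mpr ⟨hU1, hU2⟩
  set A := (1 : F →L[ℂ] F) - z • (adjoint U ∘L (1 - P))
  have hA : IsUnit A := isUnit_one_sub_smul_adjoint_comp_one_sub hU hPproj hz
  refine ⟨hA, opNorm_le_bound _ zero_le_one fun x => ?_⟩
  set y := Ring.inverse A (adjoint U (P x))
  have hAy : A y = adjoint U (P x) := congr($(Ring.mul_inverse_cancel A hA) (adjoint U (P x)))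
  calc ‖P y‖ ≤ ‖P x‖ :=
        hPproj.norm_apply_le_of_isometry_apply_eq (norm_map_of_mem_unitary hU) hz.le
          (by simpa using congr($hP2 x))
          (apply_eq_add_smul_of_one_sub_smul_adjoint_comp_apply_eq hU2 hAy)
    _ ≤ 1 * ‖x‖ := P.le_of_opNorm_le (hPproj.norm_le _) x
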